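/- For any smooth manifold M, the projection p : DC_1^2(M) → C_ℤ^2(M), p(c, h, ω) = c, induces an isomorphism on second cohomology: H^2(DC_1^•(M)) ≅ H^2(M, ℤ) (smooth singular cohomology with integer coefficients). -/

import Mathlib

open Manifold Finset
noncomputable section

/-- The `i`-th face embedding of the standard `n`-simplex into the standard `n+1`-simplex,
as a linear map (insertion of `0` at the `i`-th vertex coordinate). -/
def faceLM (n : ℕ) (i : Fin (n + 2)) : (Fin (n + 1) → ℝ) →ₗ[ℝ] (Fin (n + 2) → ℝ) where
  toFun x j := ∑ k, if i.succAbove k = j then x k else 0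
  map_add' x y := by
    funext j
    show (∑ k, if i.succAbove k = j then (x k + y k) else 0) =
      (∑ k, if i.succAbove k = j then x k else 0) + (∑ k, if i.succAbove k = j then y k else 0)
    rw [← Finset.sum_add_distrib]
    exact Finset.sum_congr rfl fun k _ => by split <;> simp
  map_smul' c x := by
    funext j
    show (∑ k, if i.succAbove k = j then (c * x k) else 0) =
      c * ∑ k, if i.succAbove k = j then x k else 0
    rw [Finset.mul_sum]
    exact Finset.sum_congr rfl fun k _ => by split <;> simp

lemma faceLM_apply (n : ℕ) (i : Fin (n + 2)) (x : Fin (n + 1) → ℝ) (j : Fin (n + 2)) :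
    faceLM n i x j = ∑ k, if i.succAbove k = j then x k else 0 := rfl

lemma faceLM_mapsTo (n : ℕ) (i : Fin (n + 2)) :
    Set.MapsTo (faceLM n i) (stdSimplex ℝ (Fin (n + 1))) (stdSimplex ℝ (Fin (n + 2))) := by
  intro x hx
  obtain ⟨hx0, hx1⟩ := hx
  constructor
  · intro j
    rw [faceLM_apply]
    refine Finset.sum_nonneg fun k _ => ?_
    split
    · exact hx0 k
    · exact le_refl 0
  · calc ∑ j, faceLM n i x j
        = ∑ j, ∑ k, (if i.succAbove k = j then x k else 0) :=
          Finset.sum_congr rfl fun j _ => faceLM_apply n i x j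
      _ = ∑ k, ∑ j, (if i.succAbove k = j then x k else 0) := Finset.sum_comm
      _ = ∑ k, x k := Finset.sum_congr rfl fun k _ => by simp [Finset.sum_ite_eq]
      _ = 1 := hx1

variable {E : Type} [NormedAddCommGroup E] [NormedSpace ℝ E]
  {H : Type} [TopologicalSpace H] (I : ModelWithCorners ℝ E H)
  (M : Type) [TopologicalSpace M] [ChartedSpace H M]

/-- A smooth singular `n`-simplex in a manifold `M`. -/
structure SSimplex (n : ℕ) where
  toFun : (Fin (n + 1) → ℝ) → M
  smooth : ContMDiffOn 𝓘(ℝ, Fin (n + 1) → ℝ) I (⊤ : ℕ∞) toFun (stdSimplex ℝ (Fin (n + 1)))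

variable {I M}

/-- The `i`-th face of a smooth singular simplex. -/
def SSimplex.face {n : ℕ} (σ : SSimplex I M (n + 1)) (i : Fin (n + 2)) : SSimplex I M n where
  toFun := σ.toFun ∘ (faceLM n i)
  smooth := by
    have h1 : ContMDiff 𝓘(ℝ, Fin (n+1) → ℝ) 𝓘(ℝ, Fin (n+2) → ℝ) (⊤ : ℕ∞) ⇑(faceLM n i) := by
      rw [← LinearMap.coe_toContinuousLinearMap' (faceLM n i)]
      exact (ContinuousLinearMap.contDiff _).contMDiff
    exact σ.smooth.comp h1.contMDiffOn (faceLM_mapsTo n i)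

variable (I M)

/-- Smooth singular chains. -/
def SChain (n : ℕ) : Type := FreeAbelianGroup (SSimplex I M n)

instance (n : ℕ) : AddCommGroup (SChain I M n) :=
  inferInstanceAs (AddCommGroup (FreeAbelianGroup (SSimplex I M n)))

/-- The boundary operator on smooth singular chains. -/
def sbd (n : ℕ) : SChain I M (n + 1) →+ SChain I M n :=
  ∑ i : Fin (n + 2), (-1 : ℤ) ^ (i : ℕ) • FreeAbelianGroup.map (fun σ => σ.face i)

variable (R : Type) [AddCommGroup R]

/-- Smooth singular cochains with coefficients in `R`. -/
def SCochain (n : ℕ) : Type := SSimplex I M n → R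

instance (n : ℕ) : AddCommGroup (SCochain I M R n) :=
  inferInstanceAs (AddCommGroup (SSimplex I M n → R))

/-- The coboundary on smooth singular cochains. -/
def scd (n : ℕ) : SCochain I M R n →+ SCochain I M R (n + 1) :=
  AddMonoidHom.mk' (fun c σ => ∑ i : Fin (n + 2), (-1 : ℤ) ^ (i : ℕ) • c (σ.face i))
    (by
      intro c c'
      funext σ
      show ∑ i : Fin (n + 2), (-1 : ℤ) ^ (i : ℕ) • (c (σ.face i) + c' (σ.face i)) =
        (∑ i : Fin (n + 2), (-1 : ℤ) ^ (i : ℕ) • c (σ.face i)) +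
          ∑ i : Fin (n + 2), (-1 : ℤ) ^ (i : ℕ) • c' (σ.face i)
      simp [smul_add, Finset.sum_add_distrib])

/-- Pairing of a cochain with a chain (evaluation / integration). -/
def pairC {n : ℕ} (c : SCochain I M R n) : SChain I M n →+ R :=
  FreeAbelianGroup.lift c

lemma pairC_add {n : ℕ} (c c' : SCochain I M R n) (x : SChain I M n) :
    pairC I M R (c + c') x = pairC I M R c x + pairC I M R c' x := by
  revert x
  show ∀ x : FreeAbelianGroup (SSimplex I M n),
    FreeAbelianGroup.lift (c + c') x = FreeAbelianGroup.lift c x + FreeAbelianGroup.lift c' x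
  intro x
  induction x using FreeAbelianGroup.induction_on with
  | zero => simp
  | of σ =>
    exact (FreeAbelianGroup.lift_apply_of (f := c + c') σ).trans
      (congrArg₂ (· + ·) (FreeAbelianGroup.lift_apply_of (f := c) σ).symm
        (FreeAbelianGroup.lift_apply_of (f := c') σ).symm)
  | neg y hy => simp only [map_neg, hy]; abel
  | add y z hy hz => simp only [map_add, hy, hz]; abel

/-- The coefficient map `ℤ → ℝ` on cochains. -/
def intToReal (n : ℕ) : SCochain I M ℤ n →+ SCochain I M ℝ n :=
  AddMonoidHom.mk' (fun c σ => ((c σ : ℤ) : ℝ))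
    (by
      intro c c'
      funext σ
      show ((c σ + c' σ : ℤ) : ℝ) = ((c σ : ℤ) : ℝ) + ((c' σ : ℤ) : ℝ)
      push_cast
      ring)

/-- Degree `n-1` part (with the convention that it is trivial for `n = 0`):
this hosts the middle ("real cochain") component of the Hopkins–Singer complex. -/
def hCompT : ℕ → Type
  | 0 => PUnit
  | (m + 1) => SCochain I M ℝ m

instance : ∀ n, AddCommGroup (hCompT I M n)
  | 0 => inferInstanceAs (AddCommGroup PUnit)
  | (m + 1) => inferInstanceAs (AddCommGroup (SCochain I M ℝ m))

/-- Differential from the `(n-1)`-st level into degree `n`. -/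
def hd : ∀ n, hCompT I M n →+ SCochain I M ℝ n
  | 0 => 0
  | (m + 1) => scd I M ℝ m

variable (Ω : ∀ n : ℕ, AddSubgroup (SCochain I M ℝ n))

/-- The Hopkins–Singer group `DC_s^n(M)`: triples `(c, h, ω)` of an integral `n`-cochain,
a real `(n-1)`-cochain and a differential form `ω` (an element of the de Rham subcomplex
`Ω ⊆ C^•_ℝ`, forms being viewed as real cochains by integration), where `ω = 0` if `n < s`. -/
def DCgrp (s n : ℕ) :
    AddSubgroup (SCochain I M ℤ n × hCompT I M n × SCochain I M ℝ n) where
  carrier := {x | x.2.2 ∈ Ω n ∧ (n < s → x.2.2 = 0)}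
  zero_mem' := ⟨(Ω n).zero_mem, fun _ => rfl⟩
  add_mem' := by
    rintro a b ⟨ha, ha'⟩ ⟨hb, hb'⟩
    exact ⟨(Ω n).add_mem ha hb, fun h => by
      show a.2.2 + b.2.2 = 0
      rw [ha' h, hb' h, add_zero]⟩
  neg_mem' := by
    rintro a ⟨ha, ha'⟩
    refine ⟨(Ω n).neg_mem ha, fun h => ?_⟩
    show -a.2.2 = 0
    rw [ha' h, neg_zero]

/-- The Hopkins–Singer differential `d(c,h,ω) = (dc, ω - c - dh, dω)`. -/
def dDC (hΩ : ∀ n x, x ∈ Ω n → scd I M ℝ n x ∈ Ω (n + 1)) (s n : ℕ) :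
    (DCgrp I M Ω s n) →+ (DCgrp I M Ω s (n + 1)) :=
  AddMonoidHom.mk'
    (fun x => ⟨(scd I M ℤ n x.1.1,
        x.1.2.2 - intToReal I M n x.1.1 - hd I M n x.1.2.1,
        scd I M ℝ n x.1.2.2),
      ⟨hΩ n _ x.2.1, fun h => by
        rw [x.2.2 (Nat.lt_of_succ_lt h)]; exact map_zero _⟩⟩)
    (by
      intro x y
      apply Subtype.ext
      simp only [AddSubgroup.coe_add, Prod.fst_add, Prod.snd_add, map_add, Prod.mk_add_mk,
        Prod.mk.injEq]
      refine ⟨trivial, Prod.ext ?_ ?_⟩ <;> (try simp only [Prod.fst_add, Prod.snd_add]) <;> abel)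

/-- Cohomology at the middle spot of a two-step complex `A → B → C`. -/
def Hq {A B C : Type*} [AddCommGroup A] [AddCommGroup B] [AddCommGroup C]
    (f : A →+ B) (g : B →+ C) : Type _ :=
  g.ker ⧸ ((f.range).addSubgroupOf g.ker)

instance {A B C : Type*} [AddCommGroup A] [AddCommGroup B] [AddCommGroup C]
    (f : A →+ B) (g : B →+ C) : AddCommGroup (Hq f g) :=
  inferInstanceAs (AddCommGroup (_ ⧸ _))

/-- Class of a cocycle in `Hq`. -/
def HqMk {A B C : Type*} [AddCommGroup A] [AddCommGroup B] [AddCommGroup C]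
    (f : A →+ B) (g : B →+ C) (b : B) (hb : b ∈ g.ker) : Hq f g :=
  QuotientAddGroup.mk (⟨b, hb⟩ : g.ker)

/-- Cycles (with the convention `Z_0 = C_0`, everything). -/
def Zcyc : ∀ n : ℕ, AddSubgroup (SChain I M n)
  | 0 => ⊤
  | (m + 1) => (sbd I M m).ker

/-!
The projection `(c, h, ω) ↦ c` commutes with the differentials, so it induces a map on
cohomology, and both halves of its bijectivity come from the de Rham theorem. Given an integral
cocycle `z`, write the real cocycle `z` as `α + d b` with `α` a form: then `(z, -b, α)` is a
cocycle lying over `z`. Given a cocycle `(c, h, ω)` with `c = d c'`, the real cochain `a = h + c'`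
has `d a = ω`, a form, so `a = α + d b` and `(c', -b, α)` is a primitive of `(c, h, ω)`.
-/

section Simplices
variable {I M}

lemma Fin.succ_succAbove_succAbove {n : ℕ} {i j : Fin (n + 2)} (h : i ≤ j) (k : Fin (n + 1)) :
    j.succ.succAbove (i.succAbove k) = i.castSucc.succAbove (j.succAbove k) := by
  rcases i with ⟨i, _⟩
  rcases j with ⟨j, _⟩
  rcases k with ⟨k, _⟩
  simp only [Fin.succAbove, Fin.lt_def, Fin.le_def] at h ⊢
  split_ifs <;> simp [Fin.ext_iff] at * <;> omega

lemma faceLM_faceLM_apply (n : ℕ) (i : Fin (n + 3)) (j : Fin (n + 2)) (x : Fin (n + 1) → ℝ)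
    (m : Fin (n + 3)) :
    faceLM (n + 1) i (faceLM n j x) m =
      ∑ k, if i.succAbove (j.succAbove k) = m then x k else 0 := by
  rw [faceLM_apply]
  have : ∀ k' : Fin (n + 2), (if i.succAbove k' = m then faceLM n j x k' else 0) =
      ∑ k, if j.succAbove k = k' then (if i.succAbove k' = m then x k else 0) else 0 := by
    intro k'
    rw [faceLM_apply]
    split
    · rfl
    · simp
  rw [Finset.sum_congr rfl fun k' _ => this k', Finset.sum_comm]
  refine Finset.sum_congr rfl fun k _ => ?_
  simp [Finset.sum_ite_eq]

lemma SSimplex.ext {n : ℕ} {σ τ : SSimplex I M n} (h : σ.toFun = τ.toFun) : σ = τ := by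
  cases σ; cases τ; simp_all

lemma SSimplex.face_face {n : ℕ} (σ : SSimplex I M (n + 2)) {i j : Fin (n + 2)} (h : i ≤ j) :
    (σ.face j.succ).face i = (σ.face i.castSucc).face j := by
  refine SSimplex.ext (funext fun x => congrArg σ.toFun (funext fun m => ?_))
  simp only [faceLM_faceLM_apply, Fin.succ_succAbove_succAbove h]

end Simplices

theorem Finset.sum_zsmul_sum_zsmul_eq_zero {A : Type*} [AddCommGroup A] {n : ℕ}
    (f : Fin (n + 3) → Fin (n + 2) → A)
    (hf : ∀ i j : Fin (n + 2), i ≤ j → f j.succ i = f i.castSucc j) :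
    ∑ a : Fin (n + 3), (-1 : ℤ) ^ (a : ℕ) • ∑ b : Fin (n + 2), (-1 : ℤ) ^ (b : ℕ) • f a b =
      0 := by
  simp only [Finset.smul_sum, smul_smul, ← Finset.sum_product', Finset.univ_product_univ]
  let S : Finset (Fin (n + 3) × Fin (n + 2)) := {p | (p.2 : ℕ) < p.1}
  -- the term at `(a, b)` with `b < a` cancels the one at `(b, a - 1)`, by `hf`
  rw [← Finset.sum_add_sum_compl S, add_eq_zero_iff_eq_neg, ← Finset.sum_neg_distrib]
  refine Finset.sum_bij'
    (fun p hp => (p.2.castSucc, p.1.pred fun h0 => by simp [S, h0] at hp))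
    (fun p hp => (p.2.succ, p.1.castLT (by simp [S] at hp; omega))) ?_ ?_ ?_ ?_ ?_
  · intro p hp; simp [S] at hp ⊢; omega
  · intro p hp; simp [S] at hp ⊢; omega
  · intro p _; simp
  · intro p _; simp
  · rintro ⟨a, b⟩ hp
    simp only [S, Finset.mem_filter_univ] at hp
    have ha : a ≠ 0 := by rintro rfl; simp at hp
    have hba : b ≤ a.pred ha := by rw [Fin.le_def, Fin.val_pred]; omega
    simp only [Fin.val_castSucc, Fin.val_pred, ← hf b _ hba, Fin.succ_pred, ← neg_smul]
    congr 1
    obtain ⟨k, hk⟩ : ∃ k, (a : ℕ) = k + 1 := ⟨a - 1, by omega⟩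
    rw [hk, Nat.add_sub_cancel, pow_succ]; ring

section Cochains
variable {I M R}

lemma scd_apply {n : ℕ} (c : SCochain I M R n)
    (σ : SSimplex I M (n + 1)) :
    scd I M R n c σ = ∑ i : Fin (n + 2), (-1 : ℤ) ^ (i : ℕ) • c (σ.face i) := rfl

lemma scd_scd (n : ℕ) (c : SCochain I M R n) :
    scd I M R (n + 1) (scd I M R n c) = 0 :=
  funext fun σ => Finset.sum_zsmul_sum_zsmul_eq_zero (fun a b => c ((σ.face a).face b))
    fun _ _ h => congrArg c (σ.face_face h)

lemma intToReal_apply {n : ℕ} (c : SCochain I M ℤ n) (σ : SSimplex I M n) :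
    intToReal I M n c σ = c σ := rfl

lemma scd_intToReal (n : ℕ) (c : SCochain I M ℤ n) :
    scd I M ℝ n (intToReal I M n c) = intToReal I M (n + 1) (scd I M ℤ n c) :=
  funext fun σ => by simp [scd_apply, intToReal_apply, zsmul_eq_mul]

end Cochains

namespace Hq
variable {A B C A' B' C' : Type*} [AddCommGroup A] [AddCommGroup B] [AddCommGroup C]
  [AddCommGroup A'] [AddCommGroup B'] [AddCommGroup C']
  {f : A →+ B} {g : B →+ C} {f' : A' →+ B'} {g' : B' →+ C'}
  {α : A →+ A'} {β : B →+ B'} {γ : C →+ C'}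

lemma map_mem_ker (hg : γ.comp g = g'.comp β) {b : B} (hb : b ∈ g.ker) : β b ∈ g'.ker := by
  rw [AddMonoidHom.mem_ker, ← AddMonoidHom.comp_apply, ← hg, AddMonoidHom.comp_apply,
    AddMonoidHom.mem_ker.1 hb, map_zero]

def map (hf : β.comp f = f'.comp α) (hg : γ.comp g = g'.comp β) : Hq f g →+ Hq f' g' :=
  QuotientAddGroup.map _ _ ((β.comp g.ker.subtype).codRestrict g'.ker fun b => map_mem_ker hg b.2)
    (by
      rintro ⟨_, hb⟩ ⟨a, rfl⟩
      exact ⟨α a, by rw [← AddMonoidHom.comp_apply, ← hf]; rfl⟩)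

lemma map_mk (hf : β.comp f = f'.comp α) (hg : γ.comp g = g'.comp β) (b : B)
    (hb : b ∈ g.ker) :
    map hf hg (HqMk f g b hb) = HqMk f' g' (β b) (map_mem_ker hg hb) := rfl

lemma map_bijective (hf : β.comp f = f'.comp α) (hg : γ.comp g = g'.comp β)
    (hlift : ∀ b' ∈ g'.ker, ∃ b ∈ g.ker, β b = b')
    (hexact : ∀ b ∈ g.ker, β b ∈ f'.range → b ∈ f.range) :
    Function.Bijective (map hf hg) := by
  refine ⟨(injective_iff_map_eq_zero _).2 fun q hq => ?_, fun q => ?_⟩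
  · induction q using QuotientAddGroup.induction_on with
    | H b =>
      have hb := AddSubgroup.mem_addSubgroupOf.1 ((QuotientAddGroup.eq_zero_iff _).1 hq)
      exact (QuotientAddGroup.eq_zero_iff _).2
        (AddSubgroup.mem_addSubgroupOf.2 (hexact b.1 b.2 hb))
  · induction q using QuotientAddGroup.induction_on with
    | H b' =>
      obtain ⟨b, hb, hbb'⟩ := hlift b'.1 b'.2
      exact ⟨HqMk f g b hb, congrArg QuotientAddGroup.mk (Subtype.ext hbb')⟩

end Hq

section HopkinsSinger
variable {I M Ω} {hΩ : ∀ n x, x ∈ Ω n → scd I M ℝ n x ∈ Ω (n + 1)}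

variable (I M Ω) in
def DCgrp.fst (s n : ℕ) : DCgrp I M Ω s n →+ SCochain I M ℤ n :=
  (AddMonoidHom.fst _ _).comp (DCgrp I M Ω s n).subtype

lemma DCgrp.fst_comp_dDC (s n : ℕ) :
    (DCgrp.fst I M Ω s (n + 1)).comp (dDC I M Ω hΩ s n) =
      (scd I M ℤ n).comp (DCgrp.fst I M Ω s n) :=
  rfl

lemma dDC_eq_iff {s n : ℕ} (y : DCgrp I M Ω s n) (x : DCgrp I M Ω s (n + 1)) :
    dDC I M Ω hΩ s n y = x ↔ scd I M ℤ n y.1.1 = x.1.1 ∧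
      y.1.2.2 - intToReal I M n y.1.1 - hd I M n y.1.2.1 = x.1.2.1 ∧
      scd I M ℝ n y.1.2.2 = x.1.2.2 := by
  rw [Subtype.ext_iff, Prod.ext_iff, Prod.ext_iff]
  rfl

variable (hDeRham : ∀ (n : ℕ) (a : SCochain I M ℝ (n + 1)),
  scd I M ℝ (n + 1) a ∈ Ω (n + 2) →
    ∃ α ∈ Ω (n + 1), ∃ b : SCochain I M ℝ n, a = α + scd I M ℝ n b)
include hDeRham

lemma exists_mem_ker_dDC_fst_eq {s n : ℕ} (hs : s ≤ n + 2) (z : SCochain I M ℤ (n + 2))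
    (hz : z ∈ (scd I M ℤ (n + 2)).ker) :
    ∃ x ∈ (dDC I M Ω hΩ s (n + 2)).ker, DCgrp.fst I M Ω s (n + 2) x = z := by
  have hdz : scd I M ℤ (n + 2) z = 0 := hz
  obtain ⟨α, hα, b, hzαb⟩ := hDeRham (n + 1) (intToReal I M (n + 2) z) (by
    rw [scd_intToReal, hdz, map_zero]
    exact (Ω _).zero_mem)
  refine ⟨⟨(z, (-b : SCochain I M ℝ (n + 1)), α), hα, fun h => absurd h (not_lt.2 hs)⟩,
    ?_, rfl⟩
  refine (dDC_eq_iff _ 0).2 ⟨hdz, ?_, ?_⟩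
  · show α - intToReal I M (n + 2) z - scd I M ℝ (n + 1) (-b) = 0
    rw [hzαb, map_neg]
    abel
  · show scd I M ℝ (n + 2) α = 0
    rw [eq_sub_of_add_eq hzαb.symm, map_sub, scd_intToReal, hdz, scd_scd, map_zero, sub_zero]

lemma mem_range_dDC_of_fst_mem_range {s n : ℕ} (hs : s ≤ n + 1) (x : DCgrp I M Ω s (n + 2))
    (hx : x ∈ (dDC I M Ω hΩ s (n + 2)).ker)
    (hc : DCgrp.fst I M Ω s (n + 2) x ∈ (scd I M ℤ (n + 1)).range) :
    x ∈ (dDC I M Ω hΩ s (n + 1)).range := by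
  obtain ⟨c', hc'⟩ := hc
  obtain ⟨-, hcurv, -⟩ := (dDC_eq_iff _ 0).1 hx
  revert hc' hcurv
  obtain ⟨⟨c, h, ω⟩, hω, -⟩ := x
  change SCochain I M ℝ (n + 1) at h
  intro (hc' : scd I M ℤ (n + 1) c' = c)
    (hcurv : ω - intToReal I M (n + 2) c - scd I M ℝ (n + 1) h = 0)
  have hda : scd I M ℝ (n + 1) (h + intToReal I M (n + 1) c') = ω := by
    rw [sub_sub, sub_eq_zero] at hcurv
    rw [map_add, scd_intToReal, hc', hcurv]
    exact add_comm _ _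
  obtain ⟨α, hα, b, hαb⟩ := hDeRham n _ (hda ▸ hω)
  refine ⟨⟨(c', (-b : SCochain I M ℝ n), α), hα, fun h => absurd h (not_lt.2 hs)⟩,
    (dDC_eq_iff _ _).2 ⟨hc', ?_, ?_⟩⟩
  · show α - intToReal I M (n + 1) c' - scd I M ℝ n (-b) = h
    rw [map_neg, eq_sub_of_add_eq hαb.symm]
    abel
  · show scd I M ℝ (n + 1) α = ω
    rw [eq_sub_of_add_eq hαb.symm, map_sub, scd_scd, hda, sub_zero]

theorem Hq.map_fst_bijective {s n : ℕ} (hs : s ≤ n + 1) :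
    Function.Bijective
      (Hq.map (DCgrp.fst_comp_dDC (hΩ := hΩ) s (n + 1))
        (DCgrp.fst_comp_dDC (hΩ := hΩ) s (n + 2))) :=
  Hq.map_bijective _ _
    (fun z hz => exists_mem_ker_dDC_fst_eq hDeRham (by omega) z hz)
    (mem_range_dDC_of_fst_mem_range hDeRham hs)

end HopkinsSinger

theorem stmt10_general
    {E : Type} [NormedAddCommGroup E] [NormedSpace ℝ E]
    {H : Type} [TopologicalSpace H] (I : ModelWithCorners ℝ E H)
    (M : Type) [TopologicalSpace M] [ChartedSpace H M]
    (Ω : ∀ n : ℕ, AddSubgroup (SCochain I M ℝ n))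
    (hΩ : ∀ n x, x ∈ Ω n → scd I M ℝ n x ∈ Ω (n + 1))
    (hDeRham : ∀ (n : ℕ) (a : SCochain I M ℝ (n + 1)),
      scd I M ℝ (n + 1) a ∈ Ω (n + 2) →
        ∃ α ∈ Ω (n + 1), ∃ b : SCochain I M ℝ n, a = α + scd I M ℝ n b) :
    ∃ e : Hq (dDC I M Ω hΩ 1 1) (dDC I M Ω hΩ 1 2) ≃+ Hq (scd I M ℤ 1) (scd I M ℤ 2),
      ∀ (x : DCgrp I M Ω 1 2) (hx : x ∈ (dDC I M Ω hΩ 1 2).ker)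
        (hx' : x.1.1 ∈ (scd I M ℤ 2).ker),
        e (HqMk _ _ x hx) = HqMk _ _ x.1.1 hx' :=
  ⟨AddEquiv.ofBijective _ (Hq.map_fst_bijective hDeRham (n := 0) le_rfl), fun x hx _ =>
    Hq.map_mk (DCgrp.fst_comp_dDC (hΩ := hΩ) 1 1) (DCgrp.fst_comp_dDC 1 2) x hx⟩

/-- For any smooth manifold `M`, the projection
`p : DC_1^2(M) → C_ℤ^2(M)`, `p(c, h, ω) = c`, induces an isomorphism on second cohomology:
`H^2(DC_1^•(M)) ≅ H^2(M, ℤ)` (smooth singular cohomology with integer coefficients).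
The de Rham complex is encoded as a `d`-stable subcomplex `Ω` of real smooth singular
cochains (forms viewed as cochains via integration), satisfying the de Rham theorem:
any real cochain `a` whose coboundary is a differential form equals `α + d b` for some
form `α` and real cochain `b` (in degree `0`, `a` itself is a form). -/
theorem stmt10
    {E : Type} [NormedAddCommGroup E] [NormedSpace ℝ E]
    {H : Type} [TopologicalSpace H] (I : ModelWithCorners ℝ E H)
    (M : Type) [TopologicalSpace M] [ChartedSpace H M] [IsManifold I (⊤ : ℕ∞) M]
    (Ω : ∀ n : ℕ, AddSubgroup (SCochain I M ℝ n))
    (hΩ : ∀ n x, x ∈ Ω n → scd I M ℝ n x ∈ Ω (n + 1))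
    (hDeRham : ∀ (n : ℕ) (a : SCochain I M ℝ (n + 1)),
      scd I M ℝ (n + 1) a ∈ Ω (n + 2) →
        ∃ α ∈ Ω (n + 1), ∃ b : SCochain I M ℝ n, a = α + scd I M ℝ n b)
    (hDeRham0 : ∀ a : SCochain I M ℝ 0, scd I M ℝ 0 a ∈ Ω 1 → a ∈ Ω 0) :
    ∃ e : Hq (dDC I M Ω hΩ 1 1) (dDC I M Ω hΩ 1 2) ≃+ Hq (scd I M ℤ 1) (scd I M ℤ 2),
      ∀ (x : DCgrp I M Ω 1 2) (hx : x ∈ (dDC I M Ω hΩ 1 2).ker)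
        (hx' : x.1.1 ∈ (scd I M ℤ 2).ker),
        e (HqMk _ _ x hx) = HqMk _ _ x.1.1 hx' :=
  stmt10_general I M Ω hΩ hDeRham

end
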